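/- The braided ASEP jump rates out of any bond sum to one: for all integers k1 ≥ 0 and all integers m, k2, Σ_{l2=0}^{k1} p_m(k1, k2; l2) = 1, where p_m(k1,k2;l2) := binom_{q²}(k1,l2) · (q^{2(m−k2)}; q^{−2})_{k1−l2} · q^{2(m−k2−k1+l2) l2}. (Equivalently, the matrix entries of the fused Hecke element Σ_1 acting on two sites with k1 and k2 particles form a probability distribution over the outcomes l2.) -/

import Mathlib

open BigOperators Finset

noncomputable section

namespace Stmt11

/-- The `q²`-deformed integer `[n]_{q²} = (1 − q^{2n})/(1 − q²)`. -/
def qInt (q : ℝ) (n : ℕ) : ℝ := (1 - q ^ (2 * n)) / (1 - q ^ 2)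

/-- The `q²`-deformed factorial `[n]_{q²}! = [1]_{q²} ⋯ [n]_{q²}`, with `[0]_{q²}! = 1`. -/
def qFact (q : ℝ) : ℕ → ℝ
  | 0 => 1
  | n + 1 => qFact q n * qInt q (n + 1)

/-- The `q²`-deformed binomial coefficient, equal to `0` when `k > n`. -/
def qBinom (q : ℝ) (n k : ℕ) : ℝ :=
  if k ≤ n then qFact q n / (qFact q k * qFact q (n - k)) else 0

/-- The Pochhammer symbol `(a;p)_n = ∏_{i=0}^{n−1} (1 − a pⁱ)`, with `(a;p)_0 = 1`. -/
def qPoch (a p : ℝ) (n : ℕ) : ℝ := ∏ i ∈ Finset.range n, (1 - a * p ^ i)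

/-- The braided ASEP jump rate
`p_m(k1,k2;l2) = binom_{q²}(k1,l2) (q^{2(m−k2)};q^{−2})_{k1−l2} q^{2(m−k2−k1+l2)l2}`
when `0 ≤ l2 ≤ k1`, and `0` otherwise.  Here `m, k2, l2` range over the integers
and `k1` over the naturals. -/
def pRate (q : ℝ) (m k2 : ℤ) (k1 : ℕ) (l2 : ℤ) : ℝ :=
  if 0 ≤ l2 ∧ l2 ≤ (k1 : ℤ) then
    qBinom q k1 l2.toNat *
      qPoch (q ^ ((2 : ℤ) * (m - k2))) (q ^ ((-2 : ℤ))) (k1 - l2.toNat) *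
      q ^ ((2 : ℤ) * (m - k2 - (k1 : ℤ) + l2) * l2)
  else 0

/-! With `a = q^{2(m-k₂)}` and `p = q⁻²`, the `q`-Pascal rule turns the weights
`W(n, l) = binom_{q²}(n, l) (a; p)_{n-l} aˡ p^{(n-l)l}` into a transition law: `W(n+1, ·)` arises from
`W(n, ·)` by moving the mass at `l` to `l + 1` with weight `a p^{n-l}` and leaving the rest at `l`.
Total mass is therefore conserved in `n`, and `W(0, 0) = 1`. -/

theorem sum_range_succ_eq_of_transfer {R : Type*} [CommRing R] {f g c : ℕ → R} {n : ℕ}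
    (hg0 : g 0 = f 0 * (1 - c 0))
    (hg : ∀ l < n + 1, g (l + 1) = f (l + 1) * (1 - c (l + 1)) + f l * c l)
    (hf : f (n + 1) = 0) :
    ∑ l ∈ range (n + 2), g l = ∑ l ∈ range (n + 1), f l := by
  have hstay : ∑ l ∈ range (n + 2), f l * (1 - c l) = ∑ l ∈ range (n + 1), f l * (1 - c l) := by
    rw [sum_range_succ, hf, zero_mul, add_zero]
  calc ∑ l ∈ range (n + 2), g l
      = ∑ l ∈ range (n + 2), f l * (1 - c l) + ∑ l ∈ range (n + 1), f l * c l := by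
        rw [sum_range_succ', sum_congr rfl fun l hl => hg l (mem_range.mp hl), sum_add_distrib,
          hg0, sum_range_succ' (fun l => f l * (1 - c l))]
        ring
    _ = ∑ l ∈ range (n + 1), f l := by
        rw [hstay, ← sum_add_distrib]
        exact sum_congr rfl fun l _ => by ring

variable {q : ℝ}

lemma qInt_succ_pos (hq : |q| < 1) (n : ℕ) : 0 < qInt q (n + 1) := by
  have hq2 : q ^ 2 < 1 := (sq_lt_one_iff_abs_lt_one q).mpr hq
  have hpow : q ^ (2 * (n + 1)) < 1 := by
    rw [pow_mul]; exact pow_lt_one₀ (sq_nonneg q) hq2 (Nat.succ_ne_zero n)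
  exact div_pos (by linarith) (by linarith)

lemma qFact_succ (n : ℕ) : qFact q (n + 1) = qFact q n * qInt q (n + 1) := rfl

lemma qFact_pos (hq : |q| < 1) (n : ℕ) : 0 < qFact q n := by
  induction n with
  | zero => exact one_pos
  | succ n ih => exact mul_pos ih (qInt_succ_pos hq n)

lemma qBinom_zero_right (hq : |q| < 1) (n : ℕ) : qBinom q n 0 = 1 := by
  simp [qBinom, qFact, (qFact_pos hq n).ne']

lemma qBinom_self (hq : |q| < 1) (n : ℕ) : qBinom q n n = 1 := by
  simp [qBinom, qFact, (qFact_pos hq n).ne']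

lemma qBinom_of_lt {n k : ℕ} (h : n < k) : qBinom q n k = 0 :=
  if_neg (Nat.not_le.mpr h)

lemma qInt_succ_eq_add (hq : |q| < 1) {n l : ℕ} (h : l ≤ n) :
    qInt q (n + 1) = q ^ (2 * (l + 1)) * qInt q (n - l) + qInt q (l + 1) := by
  have hq2 : 1 - q ^ 2 ≠ 0 := by
    have := (sq_lt_one_iff_abs_lt_one q).mpr hq; linarith
  have hsplit : q ^ (2 * (l + 1)) * q ^ (2 * (n - l)) = q ^ (2 * (n + 1)) := by
    rw [← pow_add]; congr 1; omega
  unfold qInt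
  field_simp
  linear_combination hsplit

lemma qBinom_succ_succ (hq : |q| < 1) {n l : ℕ} (h : l ≤ n) :
    qBinom q (n + 1) (l + 1) = q ^ (2 * (l + 1)) * qBinom q n (l + 1) + qBinom q n l := by
  rcases h.lt_or_eq with hl | rfl
  · obtain ⟨d, rfl⟩ : ∃ d, n = l + 1 + d := ⟨n - (l + 1), by omega⟩
    have hsub : l + 1 + d - l = d + 1 := by omega
    unfold qBinom
    rw [if_pos (by omega), if_pos (by omega), if_pos (by omega), hsub,
      show l + 1 + d + 1 - (l + 1) = d + 1 by omega, show l + 1 + d - (l + 1) = d by omega,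
      qFact_succ (l + 1 + d), qInt_succ_eq_add hq (show l ≤ l + 1 + d by omega), hsub,
      qFact_succ l, qFact_succ d]
    have := (qFact_pos hq (l + 1 + d)).ne'
    have := (qFact_pos hq l).ne'
    have := (qFact_pos hq d).ne'
    have := (qInt_succ_pos hq l).ne'
    have := (qInt_succ_pos hq d).ne'
    field_simp
  · rw [qBinom_self hq, qBinom_self hq, qBinom_of_lt (Nat.lt_succ_self l)]
    ring

lemma qPoch_succ (a p : ℝ) (n : ℕ) : qPoch a p (n + 1) = qPoch a p n * (1 - a * p ^ n) :=
  prod_range_succ _ n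

def braidedWeight (q a : ℝ) (n l : ℕ) : ℝ :=
  qBinom q n l * qPoch a (q ^ 2)⁻¹ (n - l) * (a ^ l * ((q ^ 2)⁻¹) ^ ((n - l) * l))

lemma braidedWeight_succ_zero (hq : |q| < 1) (a : ℝ) (n : ℕ) :
    braidedWeight q a (n + 1) 0 = braidedWeight q a n 0 * (1 - a * ((q ^ 2)⁻¹) ^ n) := by
  simp only [braidedWeight, qBinom_zero_right hq, Nat.sub_zero, qPoch_succ]
  ring

lemma braidedWeight_succ_succ (hq : |q| < 1) (hq0 : q ≠ 0) (a : ℝ) {n l : ℕ} (h : l ≤ n) :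
    braidedWeight q a (n + 1) (l + 1) =
      braidedWeight q a n (l + 1) * (1 - a * ((q ^ 2)⁻¹) ^ (n - (l + 1)))
        + braidedWeight q a n l * (a * ((q ^ 2)⁻¹) ^ (n - l)) := by
  rcases h.lt_or_eq with hl | rfl
  · obtain ⟨d, rfl⟩ : ∃ d, n = l + 1 + d := ⟨n - (l + 1), by omega⟩
    have hcancel : q ^ (2 * (l + 1)) * ((q ^ 2)⁻¹) ^ (l + 1) = 1 := by
      rw [pow_mul, ← mul_pow, mul_inv_cancel₀ (pow_ne_zero 2 hq0), one_pow]
    unfold braidedWeight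
    rw [show l + 1 + d + 1 - (l + 1) = d + 1 by omega, show l + 1 + d - (l + 1) = d by omega,
      show l + 1 + d - l = d + 1 by omega, qPoch_succ, qBinom_succ_succ hq (by omega)]
    linear_combination (qBinom q (l + 1 + d) (l + 1) * qPoch a (q ^ 2)⁻¹ d *
      (1 - a * ((q ^ 2)⁻¹) ^ d) * a ^ (l + 1) * ((q ^ 2)⁻¹) ^ (d * (l + 1))) * hcancel
  · simp only [braidedWeight, Nat.sub_self, qBinom_self hq, qBinom_of_lt (Nat.lt_succ_self l),
      qPoch, range_zero, prod_empty]
    ring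

lemma sum_braidedWeight_eq_one (hq : |q| < 1) (hq0 : q ≠ 0) (a : ℝ) (n : ℕ) :
    ∑ l ∈ range (n + 1), braidedWeight q a n l = 1 := by
  induction n with
  | zero => simp [braidedWeight, qBinom, qFact, qPoch]
  | succ n ih =>
    rw [← ih]
    refine sum_range_succ_eq_of_transfer (c := fun l => a * ((q ^ 2)⁻¹) ^ (n - l))
      (braidedWeight_succ_zero hq a n) (fun l hl => braidedWeight_succ_succ hq hq0 a ?_) ?_
    · omega
    · simp [braidedWeight, qBinom_of_lt (Nat.lt_succ_self n)]

lemma pRate_eq_braidedWeight (hq0 : q ≠ 0) (m k2 : ℤ) {k1 l : ℕ} (hl : l ≤ k1) :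
    pRate q m k2 k1 l = braidedWeight q (q ^ (2 * (m - k2))) k1 l := by
  have hbase : q ^ (-2 : ℤ) = (q ^ 2)⁻¹ := by rw [zpow_neg]; norm_cast
  have hexp : (2 : ℤ) * (m - k2 - k1 + l) * l = 2 * (m - k2) * l + -2 * ((k1 - l) * l : ℕ) := by
    push_cast [Nat.cast_sub hl]; ring
  unfold pRate braidedWeight
  rw [if_pos ⟨Int.natCast_nonneg l, Int.ofNat_le.mpr hl⟩, Int.toNat_natCast, hbase, hexp,
    zpow_add₀ hq0, zpow_mul q _ (l : ℤ), zpow_mul q (-2), zpow_natCast, zpow_natCast, hbase]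

/-- **The braided ASEP jump rates sum to one** (stochasticity of the fused Hecke
element `Σ₁`): for all `k1 ≥ 0` and all integers `m, k2`,
`Σ_{l2=0}^{k1} p_m(k1,k2;l2) = 1`. -/
theorem braided_rates_sum_to_one (q : ℝ) (hq0 : 0 < q) (hq1 : q < 1)
    (m k2 : ℤ) (k1 : ℕ) :
    ∑ l2 ∈ Finset.range (k1 + 1), pRate q m k2 k1 (l2 : ℤ) = 1 := by
  have hq : |q| < 1 := abs_lt.mpr ⟨by linarith, hq1⟩
  rw [← sum_braidedWeight_eq_one hq hq0.ne' (q ^ (2 * (m - k2))) k1]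
  exact sum_congr rfl fun l hl =>
    pRate_eq_braidedWeight hq0.ne' m k2 (Nat.lt_succ_iff.mp (mem_range.mp hl))

end Stmt11

end
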